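/- Let G be an infinite torsion abelian group that contains no subgroup isomorphic to the Prüfer group ℤ(p^∞) for any prime p. Then there exists a sequence of primes p_1, p_2, p_3, … such that G contains a subgroup isomorphic to the infinite direct sum ⊕_{i=1}^{∞} ℤ/p_iℤ. -/

import Mathlib

/-!
If all elements of prime order of `G` lay in a finite subgroup, every `{x | n • x = 0}` would be
finite. As `G` is infinite, its element orders would then be unbounded, so for some prime `p`
there are elements of every order `p ^ k`. Finiteness of `{x | p • x = 0}` and König's lemma
give a sequence `y` with `y 0` of order `p` and `p • y (n + 1) = y n`, and the union of the
cyclic groups `⟨y n⟩` is a copy of `ℤ(p^∞)`. So one can choose inductively elements `x n` of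
prime order outside the finite subgroup generated by the earlier ones; the cyclic groups `⟨x n⟩`
are then independent, and their sum is `⨁ n, ℤ/p_nℤ`.
-/

/-- The Prüfer group `ℤ(p^∞)`: the subgroup of the circle `ℝ/ℤ` consisting of the
`p`-power torsion elements. -/
noncomputable def prufer (p : ℕ) : AddSubgroup (AddCircle (1 : ℝ)) where
  carrier := {x | ∃ k : ℕ, (p : ℤ) ^ k • x = 0}
  zero_mem' := ⟨0, smul_zero _⟩
  add_mem' := by
    rintro x y ⟨k, hk⟩ ⟨l, hl⟩
    refine ⟨k + l, ?_⟩
    have hx : (p : ℤ) ^ (k + l) • x = 0 := by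
      rw [pow_add, mul_comm, mul_smul, hk, smul_zero]
    have hy : (p : ℤ) ^ (k + l) • y = 0 := by
      rw [pow_add, mul_smul, hl, smul_zero]
    rw [smul_add, hx, hy, add_zero]
  neg_mem' := by
    rintro x ⟨k, hk⟩
    exact ⟨k, by rw [smul_neg, hk, neg_zero]⟩

open AddSubgroup DirectSum Finset

theorem nonempty_iInter_of_finite_of_succ_subset {α : Type*} {C : ℕ → Set α}
    (h0 : (C 0).Finite) (hC : ∀ k, C (k + 1) ⊆ C k) (hne : ∀ k, (C k).Nonempty) :
    (⋂ k, C k).Nonempty := by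
  -- König's lemma: finite sets are compact in the discrete topology.
  let _ : TopologicalSpace α := ⊥
  have : DiscreteTopology α := ⟨rfl⟩
  exact IsCompact.nonempty_iInter_of_sequence_nonempty_isCompact_isClosed C hC hne h0.isCompact
    fun _ => isClosed_discrete _

theorem exists_seq_forall_image_range {α : Type*} [DecidableEq α] (P : α → Finset α → Prop)
    (h : ∀ s, ∃ y, P y s) : ∃ f : ℕ → α, ∀ n, P (f n) ((range n).image f) := by
  choose g hg using h
  let S : ℕ → Finset α := fun n => Nat.rec ∅ (fun _ s => insert (g s) s) n
  have hS : ∀ n, S n = (range n).image fun k => g (S k) := by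
    intro n
    induction n with
    | zero => rfl
    | succ n ih => rw [range_add_one, image_insert, ← ih]
  exact ⟨fun n => g (S n), fun n => hS n ▸ hg (S n)⟩

theorem iSupIndep_of_disjoint_sup_range {α : Type*} [CompleteLattice α] [IsModularLattice α]
    [IsCompactlyGenerated α] {f : ℕ → α} (h : ∀ n, Disjoint (f n) ((range n).sup f)) :
    iSupIndep f := by
  have hrange : ∀ n, (range n).SupIndep f := by
    intro n
    induction n with
    | zero => simp
    | succ n ih => rw [range_add_one]; exact ih.insert (h n)
  refine iSupIndep_iff_supIndep.2 fun s => (hrange (s.sup id + 1)).subset fun i hi => ?_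
  exact mem_range.2 (Nat.lt_add_one_iff.2 (le_sup (f := id) hi))

namespace AddSubgroup

variable {G : Type*} [AddCommGroup G]

theorem iSupIndep_of_disjoint_sup_range {K : ℕ → AddSubgroup G}
    (h : ∀ n, Disjoint (K n) ((range n).sup K)) : iSupIndep K := by
  rw [← iSupIndep_map_orderIso_iff AddSubgroup.toIntSubmodule]
  refine _root_.iSupIndep_of_disjoint_sup_range fun n => ?_
  rw [Function.comp_apply, ← map_finset_sup, disjoint_map_orderIso_iff]
  exact h n

theorem finite_finset_sup {ι : Type*} {s : Finset ι} {K : ι → AddSubgroup G}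
    (hK : ∀ i ∈ s, (K i : Set G).Finite) : ((s.sup K : AddSubgroup G) : Set G).Finite := by
  refine Finset.sup_induction (p := fun L : AddSubgroup G => (L : Set G).Finite) (by simp)
    (fun L hL M hM => ?_) hK
  rw [add_normal]
  exact hL.add hM

end AddSubgroup

theorem disjoint_zmultiples_of_addOrderOf_prime {G : Type*} [AddGroup G] {x : G}
    {K : AddSubgroup G} (hx : (addOrderOf x).Prime) (hxK : x ∉ K) :
    Disjoint (zmultiples x) K := by
  have : Finite (zmultiples x) :=
    Nat.finite_of_card_ne_zero (by rw [Nat.card_zmultiples]; exact hx.ne_zero)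
  have hdvd : Nat.card ↥(zmultiples x ⊓ K) ∣ addOrderOf x :=
    Nat.card_zmultiples x ▸ card_dvd_of_le inf_le_left
  rcases (Nat.dvd_prime hx).1 hdvd with h | h
  · exact disjoint_iff.2 (card_eq_one.1 h)
  · have := eq_of_le_of_card_ge (inf_le_left : zmultiples x ⊓ K ≤ _)
      (by rw [Nat.card_zmultiples, h])
    exact absurd (zmultiples_le.1 (this ▸ inf_le_right)) hxK

theorem exists_addEquiv_directSum_zmod_of_iSupIndep {ι G : Type*} [DecidableEq ι]
    [AddCommGroup G] (x : ι → G) (h : iSupIndep fun i => zmultiples (x i)) :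
    ∃ H : AddSubgroup G, Nonempty (H ≃+ ⨁ i, ZMod (addOrderOf (x i))) := by
  let e : ∀ i, ZMod (addOrderOf (x i)) ≃+ zmultiples (x i) := fun i =>
    zmodAddEquivOfGenerator (g := ⟨x i, mem_zmultiples _⟩)
      (fun ⟨_, k, hk⟩ => ⟨k, Subtype.ext hk⟩) (Nat.card_zmultiples _)
  exact ⟨_, ⟨(AddMonoidHom.ofInjective h.dfinsuppSumAddHom_injective).symm.trans
    (DFinsupp.mapRange.addEquiv e).symm⟩⟩

theorem Nat.dvd_finset_prod_pow_of_factorization_le {n : ℕ} {P : Finset ℕ} {k : ℕ → ℕ}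
    (hn : n ≠ 0) (h : ∀ q ∈ n.primeFactors, q ∈ P ∧ n.factorization q ≤ k q) :
    n ∣ ∏ q ∈ P, q ^ k q :=
  calc n = ∏ q ∈ n.primeFactors, q ^ n.factorization q :=
        (Nat.prod_factorization_pow_eq_self hn).symm
    _ ∣ ∏ q ∈ n.primeFactors, q ^ k q :=
        prod_dvd_prod_of_dvd _ _ fun q hq => pow_dvd_pow q (h q hq).2
    _ ∣ ∏ q ∈ P, q ^ k q := prod_dvd_prod_of_subset _ _ _ fun q hq => (h q hq).1

section FiniteSocle

variable {G : Type*} [AddCommGroup G] (hS : {x : G | (addOrderOf x).Prime}.Finite)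
include hS

theorem finite_setOf_nsmul_eq_zero {n : ℕ} (hn : n ≠ 0) : {x : G | n • x = 0}.Finite := by
  induction n using induction_on_primes with
  | zero => exact absurd rfl hn
  | one => simp
  | prime_mul p a hp ih =>
    have : Fact p.Prime := ⟨hp⟩
    have hpfin : {y : G | p • y = 0}.Finite := (hS.insert 0).subset fun y hy =>
      or_iff_not_imp_left.2 fun hy0 => by simpa [addOrderOf_eq_prime hy hy0] using hp
    have hafin := ih (right_ne_zero_of_mul hn)
    have hpa : {x : G | (p * a) • x = 0} = (a • ·) ⁻¹' {y | p • y = 0} := by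
      ext; simp [mul_smul]
    rw [hpa]
    -- the nonempty fibres of `a • ·` are translates of `{x | a • x = 0}`
    refine hpfin.preimage' fun b _ => ?_
    rcases Set.eq_empty_or_nonempty ((a • ·) ⁻¹' {b} : Set G) with h | ⟨x₀, hx₀⟩
    · simp [h]
    · refine (hafin.image (x₀ + ·)).subset fun x hx => ⟨x - x₀, ?_, add_sub_cancel x₀ x⟩
      simp_all [nsmul_sub]

theorem exists_prime_forall_exists_addOrderOf_eq_pow [Infinite G] (htor : IsAddTorsion G) :
    ∃ p, p.Prime ∧ ∀ k, ∃ x : G, addOrderOf x = p ^ k := by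
  by_contra! hbound
  choose! k hk using hbound
  have hdiv : ∀ (x : G) {d}, d ∣ addOrderOf x → ∃ y : G, addOrderOf y = d := fun x _ hd =>
    ⟨_, addOrderOf_nsmul_addOrderOf_sub (htor x).addOrderOf_pos.ne' hd⟩
  -- Then every order divides `∏ q ∈ P, q ^ k q`, `P` being the set of prime orders.
  set P := hS.toFinset.image addOrderOf
  have hdvd : ∀ x : G, addOrderOf x ∣ ∏ q ∈ P, q ^ k q := by
    intro x
    have hx := (htor x).addOrderOf_pos.ne'
    refine Nat.dvd_finset_prod_pow_of_factorization_le hx fun q hq => ⟨?_, ?_⟩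
    · obtain ⟨y, hy⟩ := hdiv x (Nat.dvd_of_mem_primeFactors hq)
      exact mem_image.2 ⟨y, by simpa [hy] using Nat.prime_of_mem_primeFactors hq, hy⟩
    · by_contra! hlt
      have hqk := ((Nat.prime_of_mem_primeFactors hq).pow_dvd_iff_le_factorization hx).2 hlt.le
      obtain ⟨y, hy⟩ := hdiv x hqk
      exact hk q (Nat.prime_of_mem_primeFactors hq) y hy
  have hN : ∏ q ∈ P, q ^ k q ≠ 0 := prod_ne_zero_iff.2 fun q hq => by
    obtain ⟨y, hy, rfl⟩ := mem_image.1 hq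
    exact pow_ne_zero _ (hS.mem_toFinset.1 hy).ne_zero
  exact Set.infinite_univ ((finite_setOf_nsmul_eq_zero hS hN).subset fun x _ =>
    addOrderOf_dvd_iff_nsmul_eq_zero.1 (hdvd x))

end FiniteSocle

section Chains

variable {A B : Type*} [AddGroup A] [AddGroup B] (m : ℕ) {a : ℕ → A}

theorem mem_iSup_zmultiples_iff_of_nsmul_succ (ha : ∀ n, m • a (n + 1) = a n) {x : A} :
    x ∈ ⨆ n, zmultiples (a n) ↔ ∃ n, x ∈ zmultiples (a n) := by
  refine mem_iSup_of_directed (Monotone.directed_le (monotone_nat_of_le_succ fun n => ?_))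
  rw [zmultiples_le, ← ha n]
  exact nsmul_mem (mem_zmultiples _) m

theorem nonempty_iSup_zmultiples_addEquiv_map (f : A →+ B) (ha : ∀ n, m • a (n + 1) = a n)
    (hf : ∀ n, addOrderOf (a n) ∣ addOrderOf (f (a n))) :
    Nonempty ((⨆ n, zmultiples (a n) : AddSubgroup A) ≃+
      (⨆ n, zmultiples (f (a n)) : AddSubgroup B)) := by
  set H := ⨆ n, zmultiples (a n)
  have hinj : Function.Injective (f.comp H.subtype) := by
    refine (injective_iff_map_eq_zero _).2 fun ⟨x, hx⟩ hfx => Subtype.ext ?_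
    obtain ⟨n, k, rfl⟩ := (mem_iSup_zmultiples_iff_of_nsmul_succ m ha).1 hx
    replace hfx : k • f (a n) = 0 := by simpa using hfx
    rw [← addOrderOf_dvd_iff_zsmul_eq_zero] at hfx
    exact addOrderOf_dvd_iff_zsmul_eq_zero.1 ((Int.natCast_dvd_natCast.2 (hf n)).trans hfx)
  have hrange : (f.comp H.subtype).range = ⨆ n, zmultiples (f (a n)) := by
    simp only [AddMonoidHom.range_comp, range_subtype, H, AddSubgroup.map_iSup,
      AddMonoidHom.map_zmultiples]
  exact ⟨(AddMonoidHom.ofInjective hinj).trans (AddEquiv.addSubgroupCongr hrange)⟩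

-- Both sides are images of `⨆ n, zmultiples (a n, b n) ≤ A × B` under injective projections.
theorem nonempty_iSup_zmultiples_addEquiv {b : ℕ → B} (ha : ∀ n, m • a (n + 1) = a n)
    (hb : ∀ n, m • b (n + 1) = b n) (hab : ∀ n, addOrderOf (a n) = addOrderOf (b n)) :
    Nonempty ((⨆ n, zmultiples (a n) : AddSubgroup A) ≃+
      (⨆ n, zmultiples (b n) : AddSubgroup B)) := by
  have hc : ∀ n, m • (a (n + 1), b (n + 1)) = (a n, b n) := fun n => by simp [ha, hb]
  have hord : ∀ n, addOrderOf (a n, b n) = addOrderOf (a n) := fun n => by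
    rw [Prod.addOrderOf, hab, Nat.lcm_self]
  obtain ⟨e₁⟩ := nonempty_iSup_zmultiples_addEquiv_map m (AddMonoidHom.fst A B) hc
    fun n => (hord n).dvd
  obtain ⟨e₂⟩ := nonempty_iSup_zmultiples_addEquiv_map m (AddMonoidHom.snd A B) hc
    fun n => (hord n ▸ hab n).dvd
  exact ⟨e₁.symm.trans e₂⟩

end Chains

noncomputable def pruferGen (p n : ℕ) : AddCircle (1 : ℝ) :=
  ((1 / (p ^ (n + 1) : ℕ) : ℝ) : AddCircle (1 : ℝ))

theorem addOrderOf_pruferGen {p : ℕ} (hp : p ≠ 0) (n : ℕ) :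
    addOrderOf (pruferGen p n) = p ^ (n + 1) :=
  AddCircle.addOrderOf_period_div (pow_pos (Nat.pos_of_ne_zero hp) _)

theorem nsmul_pruferGen_succ (p n : ℕ) : p • pruferGen p (n + 1) = pruferGen p n := by
  rw [pruferGen, pruferGen, ← AddCircle.coe_nsmul]
  congr 1
  rcases eq_or_ne p 0 with rfl | hp
  · simp
  · rw [nsmul_eq_mul]
    push_cast
    field_simp
    ring

theorem prufer_eq_iSup_zmultiples_pruferGen {p : ℕ} (hp : p ≠ 0) :
    prufer p = ⨆ n, zmultiples (pruferGen p n) := by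
  refine le_antisymm (fun x ⟨k, hk⟩ => ?_) (iSup_le fun n => zmultiples_le.2 ⟨n + 1, ?_⟩)
  · have hkx : p ^ (k + 1) • x = 0 := by
      rw [pow_succ', mul_smul, ← natCast_zsmul x (p ^ k), Nat.cast_pow, hk, smul_zero]
    obtain ⟨m, -, rfl⟩ :=
      (AddCircle.nsmul_eq_zero_iff (pow_pos (Nat.pos_of_ne_zero hp) _)).1 hkx
    rw [AddCircle.natCast_div_mul_eq_nsmul]
    exact mem_iSup_of_mem k (nsmul_mem (mem_zmultiples _) m)
  · rw [← Nat.cast_pow, natCast_zsmul, ← addOrderOf_pruferGen hp n, addOrderOf_nsmul_eq_zero]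

def HasInfiniteHeight {G : Type*} [AddMonoid G] (p : ℕ) (x : G) : Prop :=
  ∀ k : ℕ, ∃ y : G, p ^ k • y = x

theorem addOrderOf_eq_prime_pow_of_nsmul_succ {G : Type*} [AddMonoid G] {p : ℕ}
    [hp : Fact p.Prime] {y : ℕ → G} (h0 : addOrderOf (y 0) = p)
    (hy : ∀ n, p • y (n + 1) = y n) (n : ℕ) :
    addOrderOf (y n) = p ^ (n + 1) := by
  induction n with
  | zero => rw [h0, zero_add, pow_one]
  | succ n ih =>
    have hshift : p ^ (n + 1) • y (n + 1) = p ^ n • y n := by rw [pow_succ', mul_nsmul, hy]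
    refine addOrderOf_eq_prime_pow ?_ ?_
    · rw [hshift]
      exact nsmul_ne_zero_of_lt_addOrderOf (pow_ne_zero _ hp.out.ne_zero)
        (ih ▸ Nat.pow_lt_pow_right hp.out.one_lt n.lt_add_one)
    · rw [pow_succ', mul_nsmul, hy, ← ih, addOrderOf_nsmul_eq_zero]

section PrimeTorsionFinite

variable {G : Type*} [AddCommGroup G] {p : ℕ} (hfin : {x : G | p • x = 0}.Finite)
include hfin

theorem HasInfiniteHeight.exists_nsmul_eq {x : G} (hx : HasInfiniteHeight p x) :
    ∃ z, p • z = x ∧ HasInfiniteHeight p z := by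
  obtain ⟨y, hy⟩ := hx 1
  have hfibre : {z : G | p • z = x}.Finite :=
    (hfin.image (y + ·)).subset fun z hz =>
      ⟨z - y, by simp_all [nsmul_sub], add_sub_cancel y z⟩
  obtain ⟨z, hz⟩ := nonempty_iInter_of_finite_of_succ_subset
    (C := fun k => {z : G | p • z = x ∧ ∃ y, p ^ k • y = z})
    (hfibre.subset fun _ hz => hz.1)
    (fun k z ⟨hz, y, hy⟩ => ⟨hz, p • y, by rw [smul_smul, ← pow_succ, hy]⟩)
    fun k => by
      obtain ⟨y, hy⟩ := hx (k + 1)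
      exact ⟨p ^ k • y, by rw [smul_smul, ← pow_succ', hy], y, rfl⟩
  rw [Set.mem_iInter] at hz
  exact ⟨z, (hz 0).1, fun k => (hz k).2⟩

theorem exists_hasInfiniteHeight_ne_zero (hp : 1 < p)
    (horders : ∀ k, ∃ x : G, addOrderOf x = p ^ k) :
    ∃ x : G, x ≠ 0 ∧ p • x = 0 ∧ HasInfiniteHeight p x := by
  obtain ⟨x, hx⟩ := nonempty_iInter_of_finite_of_succ_subset
    (C := fun k => {x : G | x ≠ 0 ∧ p • x = 0 ∧ ∃ y, p ^ k • y = x})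
    (hfin.subset fun _ hx => hx.2.1)
    (fun k x ⟨hx0, hx, y, hy⟩ => ⟨hx0, hx, p • y, by rw [smul_smul, ← pow_succ, hy]⟩)
    fun k => by
      obtain ⟨z, hz⟩ := horders (k + 1)
      refine ⟨p ^ k • z, nsmul_ne_zero_of_lt_addOrderOf (pow_ne_zero _ (by omega))
        (hz ▸ Nat.pow_lt_pow_right hp k.lt_add_one), ?_, z, rfl⟩
      rw [smul_smul, ← pow_succ', ← hz, addOrderOf_nsmul_eq_zero]
  rw [Set.mem_iInter] at hx
  exact ⟨x, (hx 0).1, (hx 0).2.1, fun k => (hx k).2.2⟩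

theorem exists_nsmul_succ_chain (hp : p.Prime) (horders : ∀ k, ∃ x : G, addOrderOf x = p ^ k) :
    ∃ y : ℕ → G, addOrderOf (y 0) = p ∧ ∀ n, p • y (n + 1) = y n := by
  have : Fact p.Prime := ⟨hp⟩
  obtain ⟨x, hx0, hpx, hx⟩ := exists_hasInfiniteHeight_ne_zero hfin hp.one_lt horders
  choose! next hnext using fun z (hz : HasInfiniteHeight p z) => hz.exists_nsmul_eq hfin
  have hiter : ∀ n, HasInfiniteHeight p (next^[n] x) := fun n => by
    induction n with
    | zero => exact hx
    | succ n ih => rw [Function.iterate_succ_apply']; exact (hnext _ ih).2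
  refine ⟨fun n => next^[n] x, addOrderOf_eq_prime hpx hx0, fun n => ?_⟩
  show p • next^[n + 1] x = next^[n] x
  rw [Function.iterate_succ_apply']
  exact (hnext _ (hiter n)).1

theorem exists_addSubgroup_addEquiv_prufer (hp : p.Prime)
    (horders : ∀ k, ∃ x : G, addOrderOf x = p ^ k) :
    ∃ H : AddSubgroup G, Nonempty (H ≃+ prufer p) := by
  have : Fact p.Prime := ⟨hp⟩
  obtain ⟨y, hy0, hy⟩ := exists_nsmul_succ_chain hfin hp horders
  obtain ⟨e⟩ := nonempty_iSup_zmultiples_addEquiv p hy (nsmul_pruferGen_succ p) fun n => by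
    rw [addOrderOf_eq_prime_pow_of_nsmul_succ hy0 hy, addOrderOf_pruferGen hp.ne_zero]
  exact ⟨_, ⟨e.trans (AddEquiv.addSubgroupCongr
    (prufer_eq_iSup_zmultiples_pruferGen hp.ne_zero).symm)⟩⟩

end PrimeTorsionFinite

theorem exists_addOrderOf_prime_notMem {G : Type*} [AddCommGroup G] [Infinite G]
    (htor : IsAddTorsion G)
    (hnp : ∀ q : ℕ, q.Prime → ∀ H : AddSubgroup G, IsEmpty (H ≃+ prufer q))
    {K : AddSubgroup G} (hK : (K : Set G).Finite) : ∃ z, (addOrderOf z).Prime ∧ z ∉ K := by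
  by_contra! hsub
  have hS : {x : G | (addOrderOf x).Prime}.Finite := hK.subset hsub
  obtain ⟨p, hp, horders⟩ := exists_prime_forall_exists_addOrderOf_eq_pow hS htor
  obtain ⟨H, ⟨e⟩⟩ := exists_addSubgroup_addEquiv_prufer
    (finite_setOf_nsmul_eq_zero hS hp.ne_zero) hp horders
  exact (hnp p hp H).false e

/-- An infinite torsion abelian group containing no copy of any Prüfer group `ℤ(p^∞)`
contains a subgroup isomorphic to an infinite direct sum `⊕ᵢ ℤ/pᵢℤ` of cyclic groups of
prime order. -/
theorem statement11 (G : Type*) [AddCommGroup G] [Infinite G]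
    (htor : AddMonoid.IsTorsion G)
    (hnp : ∀ q : ℕ, q.Prime → ∀ H : AddSubgroup G, IsEmpty (H ≃+ ↥(prufer q))) :
    ∃ p : ℕ → ℕ, (∀ i, (p i).Prime) ∧
      ∃ H : AddSubgroup G, Nonempty (H ≃+ ⨁ i : ℕ, ZMod (p i)) := by
  classical
  obtain ⟨x, hx⟩ := exists_seq_forall_image_range
    (fun z (s : Finset G) => (addOrderOf z).Prime ∧ z ∉ s.sup zmultiples)
    fun s => exists_addOrderOf_prime_notMem htor hnp
      (finite_finset_sup fun z _ => (htor z).finite_zmultiples)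
  have hind : iSupIndep fun n => zmultiples (x n) :=
    AddSubgroup.iSupIndep_of_disjoint_sup_range fun n => by
      simpa only [sup_image, Function.comp_def] using
        disjoint_zmultiples_of_addOrderOf_prime (hx n).1 (hx n).2
  obtain ⟨H, hH⟩ := exists_addEquiv_directSum_zmod_of_iSupIndep x hind
  exact ⟨fun n => addOrderOf (x n), fun n => (hx n).1, H, hH⟩
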